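/- arXiv:1507.00691 — 6 statements merged into one kernel-verified Lean document; each statement's English description precedes it below -/
import Mathlib

section
/- (Energy-difference identity.) For every adoption vector x ∈ {0,1}^V, E(x) − E(F(x)) = ⟨F²(x) − x, A·F(x) − β⟩, where the inner product is the standard inner product on ℝ^V and vectors in {0,1}^V are regarded as real vectors. (The identity uses the symmetry of the adjacency matrix A.) -/
open Finset

/-- The threshold update map: node `i` adopts Behavior 1 iff the number of its
neighbors currently adopting Behavior 1 is at least its threshold `b i`. -/
def thrUpd {V : Type*} [Fintype V] [DecidableEq V] (G : SimpleGraph V) [DecidableRel G.Adj]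
    (b : V → ℤ) (x : V → Bool) : V → Bool :=
  fun i => decide (b i ≤ ∑ j ∈ G.neighborFinset i, (if x j then (1 : ℤ) else 0))

/-- An adoption vector regarded as a rational vector. -/
def toQ {V : Type*} (x : V → Bool) : V → ℚ := fun i => if x i then 1 else 0

/-- The half-integer thresholds `β i = b i - 1/2`. -/
def halfThr {V : Type*} (b : V → ℤ) : V → ℚ := fun i => (b i : ℚ) - 1/2

/-- The adjacency matrix of `G` applied to (the rational version of) an adoption
vector: `(A·x) i = ∑_{j ∈ δ(i)} x j`. -/
def Avec {V : Type*} [Fintype V] [DecidableEq V] (G : SimpleGraph V) [DecidableRel G.Adj]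
    (x : V → Bool) : V → ℚ :=
  fun i => ∑ j ∈ G.neighborFinset i, toQ x j

/-- The energy `E(x) = ⟨β, x⟩ − ⟨A·x − β, F(x)⟩`. -/
def energy {V : Type*} [Fintype V] [DecidableEq V] (G : SimpleGraph V) [DecidableRel G.Adj]
    (b : V → ℤ) (x : V → Bool) : ℚ :=
  (∑ i, halfThr b i * toQ x i) - ∑ i, (Avec G x i - halfThr b i) * toQ (thrUpd G b x) i

/-! Expanding the two energies, everything cancels termwise except `⟨A x, F x⟩` against
`⟨x, A F x⟩`, and these agree because the adjacency matrix is symmetric. -/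

namespace SimpleGraph

theorem sum_neighborFinset_sum_mul {V R : Type*} [Fintype V] [Semiring R] (G : SimpleGraph V)
    [DecidableRel G.Adj] (f g : V → R) :
    ∑ i, (∑ j ∈ G.neighborFinset i, f j) * g i = ∑ i, f i * ∑ j ∈ G.neighborFinset i, g j := by
  simp only [← G.adjMatrix_vecMul_apply (α := R) _ f, ← G.adjMatrix_mulVec_apply (α := R) _ g]
  exact (Matrix.dotProduct_mulVec f (G.adjMatrix R) g).symm

theorem sum_Avec_mul_toQ {V : Type*} [Fintype V] [DecidableEq V] (G : SimpleGraph V)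
    [DecidableRel G.Adj] (x y : V → Bool) :
    ∑ i, Avec G x i * toQ y i = ∑ i, toQ x i * Avec G y i :=
  G.sum_neighborFinset_sum_mul (toQ x) (toQ y)

end SimpleGraph

/-- Energy-difference identity: `E(x) − E(F(x)) = ⟨F²(x) − x, A·F(x) − β⟩`. -/
theorem energy_difference_identity {V : Type*} [Fintype V] [DecidableEq V]
    (G : SimpleGraph V) [DecidableRel G.Adj] (b : V → ℤ) (x : V → Bool) :
    energy G b x - energy G b (thrUpd G b x)
      = ∑ i, (toQ ((thrUpd G b)^[2] x) i - toQ x i) *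
          (Avec G (thrUpd G b x) i - halfThr b i) := by
  have hsymm := G.sum_Avec_mul_toQ x (thrUpd G b x)
  rw [Function.iterate_succ_apply, Function.iterate_one, energy, energy]
  simp only [sub_mul, mul_sub, Finset.sum_sub_distrib, mul_comm (toQ _ _)] at hsymm ⊢
  linear_combination -hsymm
end

section
/- (Energy decreases unless in a 2-cycle.) For every adoption vector x ∈ {0,1}^V with F²(x) ≠ x, one has E(F(x)) + 1/2 ≤ E(x). -/
open Finset

/-! With `y = F x`, the symmetry of `A` turns `E x - E y` into
`∑ i, ((A y) i - β i) * ((F y) i - x i)`. Since `(A y) i` is an integer and `β i` a half-integer,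
`(A y) i - β i` has absolute value at least `1/2`, and it is positive exactly when `(F y) i = 1`.
So every summand is nonnegative, and it is at least `1/2` wherever `F² x` and `x` differ. -/

section Arithmetic

variable (n b : ℤ) (c : Bool)

lemma intCast_sub_half_mul_indicator_sub_nonneg :
    0 ≤ ((n : ℚ) - ((b : ℚ) - 1/2)) * ((if b ≤ n then 1 else 0) - (if c then 1 else 0)) := by
  rcases le_or_gt b n with hbn | hnb
  · have : (b : ℚ) ≤ n := by exact_mod_cast hbn
    cases c
    · simp only [if_pos hbn, Bool.false_eq_true, if_false]; linarith
    · simp [hbn]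
  · have : (n : ℚ) + 1 ≤ b := by exact_mod_cast hnb
    cases c
    · simp [hnb.not_ge]
    · simp only [if_neg hnb.not_ge, if_true]; linarith

lemma half_le_intCast_sub_half_mul_indicator_sub (h : decide (b ≤ n) ≠ c) :
    1/2 ≤ ((n : ℚ) - ((b : ℚ) - 1/2)) * ((if b ≤ n then 1 else 0) - (if c then 1 else 0)) := by
  rcases le_or_gt b n with hbn | hnb
  · have : (b : ℚ) ≤ n := by exact_mod_cast hbn
    obtain rfl : c = false := by simpa [hbn] using h.symm
    simp only [if_pos hbn, Bool.false_eq_true, if_false]; linarith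
  · have : (n : ℚ) + 1 ≤ b := by exact_mod_cast hnb
    obtain rfl : c = true := by simpa [hnb.not_ge] using h.symm
    simp only [if_neg hnb.not_ge, if_true]; linarith

end Arithmetic

section Graph

open Matrix

variable {V : Type*} [Fintype V] [DecidableEq V] (G : SimpleGraph V) [DecidableRel G.Adj]

lemma Avec_eq_adjMatrix_mulVec (x : V → Bool) : Avec G x = G.adjMatrix ℚ *ᵥ toQ x := by
  ext i
  rw [SimpleGraph.adjMatrix_mulVec_apply, Avec]

lemma sum_Avec_mul_toQ_comm (x y : V → Bool) :
    ∑ i, Avec G x i * toQ y i = ∑ i, Avec G y i * toQ x i := by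
  change Avec G x ⬝ᵥ toQ y = Avec G y ⬝ᵥ toQ x
  rw [Avec_eq_adjMatrix_mulVec, Avec_eq_adjMatrix_mulVec, dotProduct_comm, dotProduct_mulVec,
    ← mulVec_transpose, SimpleGraph.transpose_adjMatrix]

lemma Avec_eq_intCast (x : V → Bool) (i : V) :
    Avec G x i = ((∑ j ∈ G.neighborFinset i, if x j then (1 : ℤ) else 0 : ℤ) : ℚ) := by
  simp [Avec, toQ]

variable (b : V → ℤ)

lemma energy_sub_energy_thrUpd (x : V → Bool) :
    energy G b x - energy G b (thrUpd G b x) =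
      ∑ i, (Avec G (thrUpd G b x) i - halfThr b i) *
        (toQ (thrUpd G b (thrUpd G b x)) i - toQ x i) := by
  have hsymm := sum_Avec_mul_toQ_comm G x (thrUpd G b x)
  simp only [energy, mul_sub, sub_mul, sum_sub_distrib]
  linarith

lemma Avec_sub_halfThr_mul_nonneg (x y : V → Bool) (i : V) :
    0 ≤ (Avec G y i - halfThr b i) * (toQ (thrUpd G b y) i - toQ x i) := by
  simp only [Avec_eq_intCast, halfThr, toQ, thrUpd, decide_eq_true_eq]
  exact intCast_sub_half_mul_indicator_sub_nonneg _ (b i) (x i)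

lemma half_le_Avec_sub_halfThr_mul {x y : V → Bool} {i : V} (h : thrUpd G b y i ≠ x i) :
    1/2 ≤ (Avec G y i - halfThr b i) * (toQ (thrUpd G b y) i - toQ x i) := by
  simp only [Avec_eq_intCast, halfThr, toQ, thrUpd, decide_eq_true_eq]
  exact half_le_intCast_sub_half_mul_indicator_sub _ (b i) (x i) h

end Graph

/-- Energy decreases unless in a 2-cycle: if `F²(x) ≠ x` then `E(F(x)) + 1/2 ≤ E(x)`. -/
theorem energy_decreases_unless_two_cycle {V : Type*} [Fintype V] [DecidableEq V]
    (G : SimpleGraph V) [DecidableRel G.Adj] (b : V → ℤ) (x : V → Bool)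
    (h : (thrUpd G b)^[2] x ≠ x) :
    energy G b (thrUpd G b x) + 1/2 ≤ energy G b x := by
  set y := thrUpd G b x
  obtain ⟨i, hi⟩ : ∃ i, thrUpd G b y i ≠ x i := Function.ne_iff.mp h
  have hdiff := energy_sub_energy_thrUpd G b x
  have hsum := single_le_sum (fun j _ => Avec_sub_halfThr_mul_nonneg G b x y j)
    (mem_univ i)
  linarith [half_le_Avec_sub_halfThr_mul G b hi]
end

section
/- (Every cycle of the threshold dynamics has length at most 2.) If x ∈ {0,1}^V is periodic under the threshold update map, i.e. F^c(x) = x for some integer c ≥ 1, then F²(x) = x. -/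
/-!
The argument of Goles and Olivos. For states `x`, `y` put
`E(x, y) = ∑ᵢ (2bᵢ - 1)(xᵢ + yᵢ) - 2 ∑_{j ∼ i} xᵢ yⱼ`, which is symmetric because adjacency is.
Along an orbit `xₜ = Fᵗ x` the quantity `E(xₜ₊₁, xₜ)` never increases, and it strictly decreases
at step `t` unless `xₜ₊₂ = xₜ`: the threshold rule makes `xₜ₊₂` the unique minimiser of
`z ↦ E(z, xₜ₊₁)`, the shifted local field `2 ∑_{j ∼ i} yⱼ - 2bᵢ + 1` being odd and hence never zero.
On a periodic orbit the energy returns to its initial value, so already the first step is not a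
strict decrease, i.e. `F² x = x`.
-/

open Finset

namespace ThresholdNetwork

variable {V : Type*} [Fintype V] (G : SimpleGraph V) [DecidableRel G.Adj] (b : V → ℤ)

def localField (y : V → Bool) (i : V) : ℤ :=
  2 * ∑ j ∈ G.neighborFinset i, (y j).toInt - 2 * b i + 1

def energy (x y : V → Bool) : ℤ :=
  ∑ i, ((2 * b i - 1) * ((x i).toInt + (y i).toInt) -
    2 * (x i).toInt * ∑ j ∈ G.neighborFinset i, (y j).toInt)

lemma localField_ne_zero (y : V → Bool) (i : V) : localField G b y i ≠ 0 := by
  unfold localField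
  omega

lemma energy_comm (x y : V → Bool) : energy G b x y = energy G b y x := by
  have hpair : ∑ i, 2 * (x i).toInt * ∑ j ∈ G.neighborFinset i, (y j).toInt =
      ∑ i, 2 * (y i).toInt * ∑ j ∈ G.neighborFinset i, (x j).toInt := by
    simp only [mul_sum]
    rw [sum_comm' (t' := univ) (s' := fun j => G.neighborFinset j) (by simp [G.adj_comm])]
    exact sum_congr rfl fun i _ => sum_congr rfl fun j _ => by ring
  simp only [energy, sum_sub_distrib, hpair, add_comm]

variable [DecidableEq V]

lemma thrUpd_apply (y : V → Bool) (i : V) :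
    thrUpd G b y i = decide (0 < localField G b y i) := by
  have hsum : ∑ j ∈ G.neighborFinset i, (if y j then (1 : ℤ) else 0) =
      ∑ j ∈ G.neighborFinset i, (y j).toInt :=
    sum_congr rfl fun j _ => by cases y j <;> rfl
  simp only [thrUpd, localField, hsum]
  exact decide_eq_decide.mpr (by omega)

lemma energy_sub_energy_thrUpd (y z : V → Bool) :
    energy G b z y - energy G b (thrUpd G b y) y =
      ∑ i, ((thrUpd G b y i).toInt - (z i).toInt) * localField G b y i := by
  rw [energy, energy, ← sum_sub_distrib]
  unfold localField
  exact sum_congr rfl fun i _ => by ring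

lemma sub_mul_localField_pos {y z : V → Bool} {i : V} (h : thrUpd G b y i ≠ z i) :
    0 < ((thrUpd G b y i).toInt - (z i).toInt) * localField G b y i := by
  have hne := localField_ne_zero G b y i
  rw [thrUpd_apply] at h ⊢
  by_cases hpos : 0 < localField G b y i
  · rw [decide_eq_true hpos] at h ⊢
    cases hz : z i <;> simp_all
  · rw [decide_eq_false hpos] at h ⊢
    cases hz : z i <;> simp_all
    omega

lemma sub_mul_localField_nonneg (y z : V → Bool) (i : V) :
    0 ≤ ((thrUpd G b y i).toInt - (z i).toInt) * localField G b y i := by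
  by_cases h : thrUpd G b y i = z i
  · simp [h]
  · exact (sub_mul_localField_pos G b h).le

lemma energy_thrUpd_le (y z : V → Bool) :
    energy G b (thrUpd G b y) y ≤ energy G b z y := by
  have := energy_sub_energy_thrUpd G b y z
  have := sum_nonneg fun i (_ : i ∈ univ) => sub_mul_localField_nonneg G b y z i
  omega

lemma energy_thrUpd_lt {y z : V → Bool} (h : thrUpd G b y ≠ z) :
    energy G b (thrUpd G b y) y < energy G b z y := by
  obtain ⟨i, hi⟩ := Function.ne_iff.mp h
  have := energy_sub_energy_thrUpd G b y z
  have := sum_pos' (fun i (_ : i ∈ univ) => sub_mul_localField_nonneg G b y z i)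
    ⟨i, mem_univ i, sub_mul_localField_pos G b hi⟩
  omega

lemma antitone_energy_iterate (x : V → Bool) :
    Antitone fun t => energy G b ((thrUpd G b)^[t + 1] x) ((thrUpd G b)^[t] x) := by
  refine antitone_nat_of_succ_le fun t => ?_
  simp only [Function.iterate_succ_apply']
  rw [energy_comm G b _ ((thrUpd G b)^[t] x)]
  exact energy_thrUpd_le G b _ _

end ThresholdNetwork

open ThresholdNetwork in
/-- Every cycle of the threshold dynamics has length at most 2: if `F^c(x) = x` for
some `c ≥ 1`, then `F²(x) = x`. -/
theorem cycles_have_length_at_most_two {V : Type*} [Fintype V] [DecidableEq V]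
    (G : SimpleGraph V) [DecidableRel G.Adj] (b : V → ℤ) (x : V → Bool)
    (c : ℕ) (hc : 1 ≤ c) (h : (thrUpd G b)^[c] x = x) :
    (thrUpd G b)^[2] x = x := by
  set F := thrUpd G b
  set g : ℕ → ℤ := fun t => energy G b (F^[t + 1] x) (F^[t] x) with hg
  have hperiod : g c = g 0 := by
    simp only [hg, Function.iterate_succ_apply', h, Function.iterate_zero_apply]
  by_contra hx
  have hdrop : g 1 < g 0 := by
    simp only [hg, Function.iterate_succ_apply', Function.iterate_zero_apply]
    rw [energy_comm G b (F x) x]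
    exact energy_thrUpd_lt G b hx
  have hanti : g c ≤ g 1 := antitone_energy_iterate G b x hc
  omega
end

section
/- (One-coordinate two-step difference forces rapid 2-cycling.) Let x ∈ {0,1}^V be such that F²(x) differs from x in exactly one coordinate. Then there exists a time t ≤ 2|V| with F^{t+2}(x) = F^t(x); that is, the trajectory from x enters a cycle of length at most 2 within 2|V| time steps. -/
/-!
The threshold map `F` is monotone, hence so is `F²`. If `x` and `F²(x)` differ in a single
coordinate they are comparable, so the `F²`-orbit of `x` is a monotone or antitone chain in the
Boolean lattice `{0,1}^V`. Such a chain can strictly move at most `|V|` times, so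
`F^{2k+2}(x) = F^{2k}(x)` for some `k ≤ |V|`.
-/

open Finset

lemma monotone_thrUpd {V : Type*} [Fintype V] [DecidableEq V] (G : SimpleGraph V)
    [DecidableRel G.Adj] (b : V → ℤ) : Monotone (thrUpd G b) := by
  intro x y hxy i
  have hsum : ∑ j ∈ G.neighborFinset i, (if x j then (1 : ℤ) else 0)
      ≤ ∑ j ∈ G.neighborFinset i, (if y j then (1 : ℤ) else 0) :=
    sum_le_sum fun j _ => by
      have := Bool.le_iff_imp.mp (hxy j)
      split_ifs <;> simp_all
  refine Bool.le_iff_imp.mpr fun hb => ?_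
  simp only [thrUpd, decide_eq_true_eq] at hb ⊢
  exact hb.trans hsum

section BoolLattice

variable {V : Type*} [Fintype V]

lemma Pi.card_filter_lt_card_filter {x y : V → Bool} (hxy : x < y) :
    #{i | x i} < #{i | y i} := by
  obtain ⟨hle, i, hi⟩ := Pi.lt_def.mp hxy
  have hsub : ({i | x i} : Finset V) ⊆ ({i | y i} : Finset V) := fun j hj => by
    simpa using Bool.le_iff_imp.mp (hle j) (by simpa using hj)
  apply card_lt_card
  rw [ssubset_iff_of_subset hsub]
  exact ⟨i, by simp_all [Bool.lt_iff]⟩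

lemma Pi.le_or_ge_of_card_filter_ne_le_one {x y : V → Bool} (h : #{i | y i ≠ x i} ≤ 1) :
    x ≤ y ∨ y ≤ x := by
  by_contra! hne
  simp only [Pi.le_def, not_forall, not_le] at hne
  obtain ⟨⟨i, hi⟩, ⟨j, hj⟩⟩ := hne
  have hij : i ≠ j := by
    rintro rfl
    exact lt_asymm hi hj
  have : 1 < #{i | y i ≠ x i} :=
    one_lt_card.mpr ⟨i, by simpa using hi.ne, j, by simpa using hj.ne', hij⟩
  omega

lemma Monotone.exists_le_card_succ_eq {u : ℕ → V → Bool} (hu : Monotone u) :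
    ∃ k ≤ Fintype.card V, u (k + 1) = u k := by
  by_contra! hne
  have grow : ∀ k ≤ Fintype.card V + 1, k ≤ #{i | u k i} := by
    intro k
    induction k with
    | zero => simp
    | succ k ih =>
      intro hk
      have := Pi.card_filter_lt_card_filter
        ((hu (Nat.le_add_right k 1)).lt_of_ne (hne k (by omega)).symm)
      have := ih (by omega)
      omega
  have := grow _ le_rfl
  have := card_le_univ {i | u (Fintype.card V + 1) i}
  omega

lemma Antitone.exists_le_card_succ_eq {u : ℕ → V → Bool} (hu : Antitone u) :
    ∃ k ≤ Fintype.card V, u (k + 1) = u k := by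
  obtain ⟨k, hk, heq⟩ := Monotone.exists_le_card_succ_eq (u := fun n => (u n)ᶜ)
    fun _ _ h => compl_le_compl (hu h)
  exact ⟨k, hk, compl_injective heq⟩

lemma Monotone.exists_le_card_iterate_succ_eq {f : (V → Bool) → V → Bool} (hf : Monotone f)
    {x : V → Bool} (hx : x ≤ f x ∨ f x ≤ x) :
    ∃ k ≤ Fintype.card V, f^[k + 1] x = f^[k] x :=
  hx.elim (fun h => (hf.monotone_iterate_of_le_map h).exists_le_card_succ_eq)
    (fun h => (hf.antitone_iterate_of_map_le h).exists_le_card_succ_eq)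

end BoolLattice

/-- One-coordinate two-step difference forces rapid 2-cycling: if `F²(x)` differs
from `x` in exactly one coordinate, then the trajectory from `x` enters a cycle of
length at most 2 within `2|V|` time steps. -/
theorem one_coordinate_difference_forces_rapid_two_cycle {V : Type*} [Fintype V]
    [DecidableEq V] (G : SimpleGraph V) [DecidableRel G.Adj] (b : V → ℤ) (x : V → Bool)
    (h : (Finset.univ.filter fun i => (thrUpd G b)^[2] x i ≠ x i).card = 1) :
    ∃ t ≤ 2 * Fintype.card V, (thrUpd G b)^[t + 2] x = (thrUpd G b)^[t] x := by
  obtain ⟨k, hk, hfix⟩ := ((monotone_thrUpd G b).iterate 2).exists_le_card_iterate_succ_eq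
    (Pi.le_or_ge_of_card_filter_ne_le_one h.le)
  refine ⟨2 * k, by omega, ?_⟩
  rwa [show 2 * k + 2 = 2 * (k + 1) by ring, Function.iterate_mul, Function.iterate_mul]
end

section
/- (The long-term average adoption rate is well defined.) For every initial adoption vector x(0) ∈ {0,1}^V, the limit lim_{t→∞} Σ_{i∈V} (1/2)·(x_i(t) + x_i(t+1)) exists, where x(t) := F^t(x(0)). Moreover this limit is attained for all t ≥ 2|E| + |V|: the quantity Σ_{i∈V} (1/2)(x_i(t) + x_i(t+1)) is constant for t ≥ 2|E| + |V|. -/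
/-!
With thresholds clamped to `[0, deg + 1]` (which does not change the dynamics), Goles' energy
`E(u, v) = ∑ᵢ (bᵢ - 1)(uᵢ + vᵢ) - ∑ᵢ uᵢ nᵢ(v)` of consecutive states, where `nᵢ(v)` counts the
active neighbours of `i`, takes values in an interval of length `∑ᵢ (deg i + 1) = 2|E| + |V|`
along an orbit. Because `∑ᵢ uᵢ nᵢ(v)` is symmetric in `u, v`, the energy drops by at least one
from `(x(t+1), x(t))` to `(x(t+2), x(t+1))` whenever some node is off at `t` and on at `t + 2`.
The update map is monotone, so such an up-switch at time `t` forces up-switches at all earlier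
times, whence `t < 2|E| + |V|`. Complementing all states turns down-switches into up-switches
for the thresholds `deg + 1 - b`. Hence `x(t+2) = x(t)` for `t ≥ 2|E| + |V|`.
-/

open Finset

/-- An adoption vector regarded as a real vector. -/
def toR {V : Type*} (x : V → Bool) : V → ℝ := fun i => if x i then 1 else 0

section Energy

variable {V : Type*} [Fintype V] (G : SimpleGraph V) [DecidableRel G.Adj]

lemma Bool.toInt_mono : Monotone Bool.toInt := by
  intro a c h
  revert h
  cases a <;> cases c <;> decide

def activeNbrCount (y : V → Bool) (i : V) : ℤ := ∑ j ∈ G.neighborFinset i, (y j).toInt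

lemma activeNbrCount_nonneg (y : V → Bool) (i : V) : 0 ≤ activeNbrCount G y i :=
  sum_nonneg fun j _ => by cases y j <;> decide

lemma activeNbrCount_le_degree (y : V → Bool) (i : V) :
    activeNbrCount G y i ≤ G.degree i := by
  rw [← G.card_neighborFinset_eq_degree, ← nsmul_one]
  exact sum_le_card_nsmul _ _ _ fun j _ => by cases y j <;> decide

lemma activeNbrCount_mono {y z : V → Bool} (h : y ≤ z) (i : V) :
    activeNbrCount G y i ≤ activeNbrCount G z i :=
  sum_le_sum fun j _ => Bool.toInt_mono (h j)

lemma activeNbrCount_compl (y : V → Bool) (i : V) :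
    activeNbrCount G yᶜ i = G.degree i - activeNbrCount G y i := by
  rw [← G.card_neighborFinset_eq_degree, card_eq_sum_ones, Nat.cast_sum, activeNbrCount,
    activeNbrCount, ← sum_sub_distrib]
  exact sum_congr rfl fun j _ => by rw [Pi.compl_apply]; cases y j <;> rfl

lemma sum_toInt_mul_activeNbrCount_comm (u v : V → Bool) :
    ∑ i, (u i).toInt * activeNbrCount G v i = ∑ i, (v i).toInt * activeNbrCount G u i := by
  simp only [activeNbrCount, mul_sum]
  rw [sum_comm' (t' := univ) (s' := fun j => G.neighborFinset j) (by simp [G.adj_comm])]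
  exact sum_congr rfl fun _ _ => sum_congr rfl fun _ _ => mul_comm _ _

def thrEnergy (θ : V → ℤ) (u v : V → Bool) : ℤ :=
  ∑ i, (θ i * ((u i).toInt + (v i).toInt) - (u i).toInt * activeNbrCount G v i)

lemma thrEnergy_sub_thrEnergy (θ : V → ℤ) (u v w : V → Bool) :
    thrEnergy G θ u v - thrEnergy G θ w u
      = ∑ i, ((w i).toInt - (v i).toInt) * (activeNbrCount G u i - θ i) := by
  have hsymm := sum_toInt_mul_activeNbrCount_comm G u v
  simp only [thrEnergy, sub_mul, mul_sub, sum_sub_distrib, add_mul, sum_add_distrib,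
    mul_comm (θ _)] at hsymm ⊢
  linear_combination -hsymm

/-- The `i`-th summand of `thrEnergy G (b - 1) (thrUpd G b v) v`, with `n = nᵢ(v)` and
`d = deg i`. -/
lemma thrEnergy_term_mem_Icc {b n d : ℤ} (hn0 : 0 ≤ n) (hnd : n ≤ d) (hb0 : 0 ≤ b)
    (hbd : b ≤ d + 1) (v : Bool) :
    (b - 1) * ((decide (b ≤ n)).toInt + v.toInt) - (decide (b ≤ n)).toInt * n
      ∈ Set.Icc (b - 2 - d) (b - 1) := by
  by_cases h : b ≤ n <;> cases v <;> simp [h] <;> omega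

end Energy

section Dynamics

variable {V : Type*} [Fintype V] [DecidableEq V] (G : SimpleGraph V) [DecidableRel G.Adj]
  (b : V → ℤ)

lemma thrUpd_apply (y : V → Bool) (i : V) :
    thrUpd G b y i = decide (b i ≤ activeNbrCount G y i) := by
  have h : ∀ c : Bool, (if c then (1 : ℤ) else 0) = c.toInt := by decide
  simp only [thrUpd, activeNbrCount, h]
  exact decide_eq_decide.mpr Iff.rfl

lemma thrUpd_monotone : Monotone (thrUpd G b) := fun y z h i => by
  simp only [thrUpd_apply, Bool.le_iff_imp, decide_eq_true_eq]
  exact fun hy => hy.trans (activeNbrCount_mono G h i)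

lemma thrUpd_clamp :
    thrUpd G (fun i => max 0 (min (b i) (G.degree i + 1))) = thrUpd G b := by
  funext y i
  have := activeNbrCount_nonneg G y i
  have := activeNbrCount_le_degree G y i
  simp only [thrUpd_apply, decide_eq_decide]
  omega

lemma thrUpd_semiconj_compl :
    Function.Semiconj compl (thrUpd G b) (thrUpd G fun i => G.degree i + 1 - b i) := by
  intro y
  funext i
  simp only [Pi.compl_apply, thrUpd_apply, activeNbrCount_compl, Bool.compl_eq_bnot,
    ← decide_not, decide_eq_decide]
  omega

lemma thrEnergy_add_one_le {u v : V → Bool} (h : ¬ thrUpd G b u ≤ v) :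
    thrEnergy G (fun i => b i - 1) (thrUpd G b u) u + 1
      ≤ thrEnergy G (fun i => b i - 1) u v := by
  have hdiff := thrEnergy_sub_thrEnergy G (fun i => b i - 1) u v (thrUpd G b u)
  set term : V → ℤ := fun i =>
    ((thrUpd G b u i).toInt - (v i).toInt) * (activeNbrCount G u i - (b i - 1))
  have hterm : ∀ i, 0 ≤ term i ∧ (¬ thrUpd G b u i ≤ v i → 1 ≤ term i) := fun i => by
    simp only [term, thrUpd_apply]
    by_cases hb : b i ≤ activeNbrCount G u i <;> cases v i <;> simp [hb] <;> omega
  obtain ⟨i, hi⟩ : ∃ i, ¬ thrUpd G b u i ≤ v i := by simpa [Pi.le_def] using h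
  have := single_le_sum (fun j _ => (hterm j).1) (mem_univ i)
  linarith [(hterm i).2 hi]

lemma thrEnergy_sub_thrEnergy_le (hb0 : ∀ i, 0 ≤ b i) (hbd : ∀ i, b i ≤ G.degree i + 1)
    (v w : V → Bool) :
    thrEnergy G (fun i => b i - 1) (thrUpd G b v) v
        - thrEnergy G (fun i => b i - 1) (thrUpd G b w) w
      ≤ 2 * #G.edgeFinset + Fintype.card V := by
  have hterm := fun y i => thrEnergy_term_mem_Icc (activeNbrCount_nonneg G y i)
    (activeNbrCount_le_degree G y i) (hb0 i) (hbd i) (y i)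
  calc _ ≤ ∑ i, ((G.degree i : ℤ) + 1) := by
        simp only [thrEnergy, thrUpd_apply, ← sum_sub_distrib]
        exact sum_le_sum fun i _ => by
          have := hterm v i
          have := hterm w i
          simp only [Set.mem_Icc] at *
          omega
    _ = _ := by
        rw [sum_add_distrib, ← Nat.cast_sum, G.sum_degrees_eq_twice_card_edges]
        simp

lemma iterate_add_two_le_of_nonneg_of_le_degree_add_one (hb0 : ∀ i, 0 ≤ b i)
    (hbd : ∀ i, b i ≤ G.degree i + 1) (x0 : V → Bool) {t : ℕ}
    (ht : 2 * #G.edgeFinset + Fintype.card V ≤ t) :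
    (thrUpd G b)^[t + 2] x0 ≤ (thrUpd G b)^[t] x0 := by
  have hsucc : ∀ s, (thrUpd G b)^[s + 1] x0 = thrUpd G b ((thrUpd G b)^[s] x0) :=
    fun s => Function.iterate_succ_apply' _ s x0
  set E : ℕ → ℤ := fun s =>
    thrEnergy G (fun i => b i - 1) ((thrUpd G b)^[s + 1] x0) ((thrUpd G b)^[s] x0)
  by_contra h
  have hflip : ∀ s ≤ t, ¬ (thrUpd G b)^[s + 2] x0 ≤ (thrUpd G b)^[s] x0 := fun s hs hle => by
    refine h ?_
    have := (thrUpd_monotone G b).iterate (t - s) hle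
    rwa [← Function.iterate_add_apply, ← Function.iterate_add_apply,
      show t - s + (s + 2) = t + 2 by omega, show t - s + s = t by omega] at this
  have hdesc : ∀ s ≤ t + 1, E s + s ≤ E 0 := by
    intro s hs
    induction s with
    | zero => simp
    | succ s ih =>
      have hstep : E (s + 1) + 1 ≤ E s := by
        simpa only [E, hsucc] using
          thrEnergy_add_one_le G b (by simpa only [hsucc] using hflip s (by omega))
      push_cast
      linarith [ih (by omega)]
  have hwidth : E 0 - E (t + 1) ≤ 2 * #G.edgeFinset + Fintype.card V := by
    simpa only [E, hsucc, Function.iterate_zero_apply] using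
      thrEnergy_sub_thrEnergy_le G b hb0 hbd x0 ((thrUpd G b)^[t + 1] x0)
  have := hdesc (t + 1) le_rfl
  push_cast at this
  omega

lemma iterate_add_two_le (x0 : V → Bool) {t : ℕ}
    (ht : 2 * #G.edgeFinset + Fintype.card V ≤ t) :
    (thrUpd G b)^[t + 2] x0 ≤ (thrUpd G b)^[t] x0 := by
  rw [← thrUpd_clamp G b]
  exact iterate_add_two_le_of_nonneg_of_le_degree_add_one G _ (fun _ => le_max_left _ _)
    (fun _ => max_le (by positivity) (min_le_right _ _)) x0 ht

lemma le_iterate_add_two (x0 : V → Bool) {t : ℕ}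
    (ht : 2 * #G.edgeFinset + Fintype.card V ≤ t) :
    (thrUpd G b)^[t] x0 ≤ (thrUpd G b)^[t + 2] x0 := by
  have hconj := (thrUpd_semiconj_compl G b).iterate_right
  rw [← compl_le_compl_iff_le, (hconj _).eq, (hconj _).eq]
  exact iterate_add_two_le G _ x0ᶜ ht

lemma iterate_add_two_eq (x0 : V → Bool) {t : ℕ}
    (ht : 2 * #G.edgeFinset + Fintype.card V ≤ t) :
    (thrUpd G b)^[t + 2] x0 = (thrUpd G b)^[t] x0 :=
  le_antisymm (iterate_add_two_le G b x0 ht) (le_iterate_add_two G b x0 ht)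

end Dynamics

/-- The long-term average adoption rate is well defined: the limit of
`∑_i (1/2)(x_i(t) + x_i(t+1))` exists and is attained for all `t ≥ 2|E| + |V|`. -/
theorem long_term_average_adoption_well_defined {V : Type*} [Fintype V] [DecidableEq V]
    (G : SimpleGraph V) [DecidableRel G.Adj] (b : V → ℤ) (x0 : V → Bool) :
    ∃ L : ℝ,
      Filter.Tendsto
        (fun t => ∑ i, (1 / 2 : ℝ) *
          (toR ((thrUpd G b)^[t] x0) i + toR ((thrUpd G b)^[t + 1] x0) i))
        Filter.atTop (nhds L) ∧
      ∀ t ≥ 2 * G.edgeFinset.card + Fintype.card V,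
        (∑ i, (1 / 2 : ℝ) *
          (toR ((thrUpd G b)^[t] x0) i + toR ((thrUpd G b)^[t + 1] x0) i)) = L := by
  set N := 2 * #G.edgeFinset + Fintype.card V
  set q : ℕ → ℝ := fun t => ∑ i, (1 / 2 : ℝ) *
    (toR ((thrUpd G b)^[t] x0) i + toR ((thrUpd G b)^[t + 1] x0) i)
  have hstep : ∀ t ≥ N, q (t + 1) = q t := fun t ht => by
    simp only [q, show t + 1 + 1 = t + 2 from rfl, iterate_add_two_eq G b x0 ht, add_comm]
  have hconst : ∀ t ≥ N, q t = q N := fun t ht => by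
    induction t, ht using Nat.le_induction with
    | base => rfl
    | succ t ht ih => exact (hstep t ht).trans ih
  exact ⟨q N, tendsto_atTop_of_eventually_const hconst, hconst⟩
end

section
/- (Fixed-duration intervention convergence bound.) Let S ⊆ V be a seed set and let d ≥ 1. Consider the fixed-duration process: x(0) is arbitrary with x(0)_i = 1 for i ∈ S, the forced update F_S (which sets seeds to 1 and applies the threshold rule elsewhere) is applied for time steps 1,...,d−1, and the free update F is applied at all time steps t ≥ d. Then within d + 2|E| + |V| time steps the adoption vector converges to a cycle of length at most 2: there exists t ≤ d + 2|E| + |V| with x(t+2) = x(t). -/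
/-!
After time `d - 1` the process is the free threshold dynamics `F`, which is monotone. Goles'
energy `E_c(x, y) = c ⬝ (x + y) - yᵀ A x` satisfies, along an orbit,
`E_c(x(t), x(t+1)) - E_c(x(t-1), x(t)) = (x(t+1) - x(t-1)) ⬝ (c - A x(t))`; for `c = b` every
summand is `≤ 0` and a node switching `1 → 0` between `t - 1` and `t + 1` contributes `≤ -1`,
for `c = b - 1` the same holds with switches `0 → 1`. By monotonicity, `x(t) ≤ x(t+2)` persists
once it holds, so without a 2-cycle either every step has a `1 → 0` switch or every step has a
`0 → 1` switch, and one of the two energies drops at every step. Clamping the thresholds to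
`[0, deg + 1]` does not change `F`, and then either energy varies by at most
`∑ (deg i + 1) = 2|E| + |V|` along an orbit.
-/

open Finset

/-- The forced update with seed set `S`: seeds are forced to Behavior 1 and all other
nodes apply the threshold rule. -/
def forcedUpd {V : Type*} [Fintype V] [DecidableEq V] (G : SimpleGraph V)
    [DecidableRel G.Adj] (b : V → ℤ) (S : Finset V) (x : V → Bool) : V → Bool :=
  fun i => if i ∈ S then true else thrUpd G b x i

/-- The fixed-duration process: starting from `x0`, the forced update `F_S` produces
the adoption vectors at time steps `1, ..., d - 1`, and the free update `F` is applied
at all time steps `t ≥ d`. -/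
def fdTraj {V : Type*} [Fintype V] [DecidableEq V] (G : SimpleGraph V)
    [DecidableRel G.Adj] (b : V → ℤ) (S : Finset V) (d : ℕ) (x0 : V → Bool) :
    ℕ → (V → Bool)
  | 0 => x0
  | t + 1 =>
    if t + 1 ≤ d - 1 then forcedUpd G b S (fdTraj G b S d x0 t)
    else thrUpd G b (fdTraj G b S d x0 t)

open Matrix

theorem add_le_of_forall_succ_lt {e : ℕ → ℤ} {n : ℕ} (h : ∀ k < n, e (k + 1) < e k) :
    e n + n ≤ e 0 := by
  induction n with
  | zero => simp
  | succ n ih =>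
    have := ih fun k hk => h k (by omega)
    have := h n (by omega)
    push_cast
    omega

theorem Monotone.iterate_add_le_iterate_add {α : Type*} [Preorder α] {f : α → α}
    (hf : Monotone f) {x : α} {a b : ℕ} (h : f^[a] x ≤ f^[b] x) (j : ℕ) :
    f^[a + j] x ≤ f^[b + j] x := by
  rw [add_comm a, add_comm b, Function.iterate_add_apply, Function.iterate_add_apply]
  exact hf.iterate j h

theorem Monotone.forall_not_le_or_forall_not_ge_of_iterate_add_two_ne {α : Type*}
    [PartialOrder α] {f : α → α} (hf : Monotone f) (x : α) (n : ℕ)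
    (h : ∀ k ≤ n, f^[k + 2] x ≠ f^[k] x) :
    (∀ k ≤ n, ¬ f^[k] x ≤ f^[k + 2] x) ∨ (∀ k ≤ n, ¬ f^[k + 2] x ≤ f^[k] x) := by
  by_contra! hboth
  obtain ⟨⟨k, hk, hup⟩, ⟨l, hl, hdown⟩⟩ := hboth
  rcases le_total k l with hkl | hlk
  · obtain ⟨j, rfl⟩ := exists_add_of_le hkl
    have := hf.iterate_add_le_iterate_add hup j
    rw [add_right_comm] at this
    exact h _ hl (le_antisymm hdown this)
  · obtain ⟨j, rfl⟩ := exists_add_of_le hlk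
    have := hf.iterate_add_le_iterate_add hdown j
    rw [add_right_comm] at this
    exact h _ hk (le_antisymm this hup)

namespace ThresholdDynamics

variable {V : Type*} [Fintype V] (G : SimpleGraph V) [DecidableRel G.Adj]

def ind (x : V → Bool) : V → ℤ := fun i => if x i then 1 else 0

lemma adjMatrix_mulVec_ind_apply (x : V → Bool) (i : V) :
    (G.adjMatrix ℤ *ᵥ ind x) i = #{j ∈ G.neighborFinset i | x j} := by
  rw [SimpleGraph.adjMatrix_mulVec_apply, ← sum_boole]
  rfl

lemma adjMatrix_mulVec_ind_nonneg (x : V → Bool) (i : V) :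
    0 ≤ (G.adjMatrix ℤ *ᵥ ind x) i := by
  rw [adjMatrix_mulVec_ind_apply]
  positivity

lemma adjMatrix_mulVec_ind_le_degree (x : V → Bool) (i : V) :
    (G.adjMatrix ℤ *ᵥ ind x) i ≤ G.degree i := by
  rw [adjMatrix_mulVec_ind_apply, ← SimpleGraph.card_neighborFinset_eq_degree]
  exact_mod_cast card_filter_le _ _

def energy (c : V → ℤ) (x y : V → Bool) : ℤ :=
  c ⬝ᵥ (ind x + ind y) - ind y ⬝ᵥ (G.adjMatrix ℤ *ᵥ ind x)

lemma energy_sub_energy (c : V → ℤ) (u v w : V → Bool) :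
    energy G c v w - energy G c u v = (ind w - ind u) ⬝ᵥ (c - G.adjMatrix ℤ *ᵥ ind v) := by
  have symm : ind v ⬝ᵥ (G.adjMatrix ℤ *ᵥ ind u) = ind u ⬝ᵥ (G.adjMatrix ℤ *ᵥ ind v) := by
    rw [dotProduct_mulVec, ← mulVec_transpose, SimpleGraph.transpose_adjMatrix,
      dotProduct_comm]
  simp only [energy, add_dotProduct, sub_dotProduct, dotProduct_sub, dotProduct_comm c]
  linarith

def localEnergy (c : V → ℤ) (x y : V → Bool) (i : V) : ℤ :=
  c i * (ind x i + ind y i) - ind y i * (G.adjMatrix ℤ *ᵥ ind x) i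

lemma energy_eq_sum_localEnergy (c : V → ℤ) (x y : V → Bool) :
    energy G c x y = ∑ i, localEnergy G c x y i := by
  simp only [energy, localEnergy, dotProduct, Pi.add_apply, sum_sub_distrib]

variable [DecidableEq V]

lemma thrUpd_eq_true_iff (b : V → ℤ) (x : V → Bool) (i : V) :
    thrUpd G b x i = true ↔ b i ≤ (G.adjMatrix ℤ *ᵥ ind x) i := by
  rw [SimpleGraph.adjMatrix_mulVec_apply]
  exact decide_eq_true_iff

lemma ind_thrUpd (b : V → ℤ) (x : V → Bool) (i : V) :
    ind (thrUpd G b x) i = if b i ≤ (G.adjMatrix ℤ *ᵥ ind x) i then 1 else 0 := by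
  simp only [ind, thrUpd_eq_true_iff]

lemma thrUpd_monotone (b : V → ℤ) : Monotone (thrUpd G b) := by
  intro x y hxy i
  rw [Bool.le_iff_imp, thrUpd_eq_true_iff, thrUpd_eq_true_iff]
  refine fun h => h.trans ?_
  simp only [SimpleGraph.adjMatrix_mulVec_apply]
  refine sum_le_sum fun j _ => ?_
  have := Bool.le_iff_imp.mp (hxy j)
  unfold ind
  split_ifs <;> simp_all

def clampThreshold (b : V → ℤ) (i : V) : ℤ := max 0 (min (b i) (G.degree i + 1))

lemma thrUpd_clampThreshold (b : V → ℤ) : thrUpd G (clampThreshold G b) = thrUpd G b := by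
  funext x i
  rw [Bool.eq_iff_iff, thrUpd_eq_true_iff, thrUpd_eq_true_iff, clampThreshold]
  have := adjMatrix_mulVec_ind_nonneg G x i
  have := adjMatrix_mulVec_ind_le_degree G x i
  omega

lemma ind_thrUpd_sub_mul_nonpos {b c : V → ℤ} (hc : b - 1 ≤ c) (hcb : c ≤ b) (u v : V → Bool)
    (i : V) : (ind (thrUpd G b v) i - ind u i) * (c i - (G.adjMatrix ℤ *ᵥ ind v) i) ≤ 0 := by
  have h1 : b i - 1 ≤ c i := hc i
  have h2 : c i ≤ b i := hcb i
  rw [ind_thrUpd]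
  unfold ind
  split_ifs <;> nlinarith

lemma energy_thrUpd_lt {b c : V → ℤ} (hc : b - 1 ≤ c) (hcb : c ≤ b) {u v : V → Bool} (i : V)
    (hi : (ind (thrUpd G b v) i - ind u i) * (c i - (G.adjMatrix ℤ *ᵥ ind v) i) < 0) :
    energy G c v (thrUpd G b v) < energy G c u v := by
  have hdrop : (ind (thrUpd G b v) - ind u) ⬝ᵥ (c - G.adjMatrix ℤ *ᵥ ind v) < 0 := by
    have := sum_lt_sum (g := fun _ => (0 : ℤ))
      (fun j _ => ind_thrUpd_sub_mul_nonpos G hc hcb u v j) ⟨i, mem_univ i, hi⟩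
    rwa [sum_const_zero] at this
  linarith [energy_sub_energy G c u v (thrUpd G b v)]

lemma energy_thrUpd_lt_of_not_le (b : V → ℤ) {u v : V → Bool} (h : ¬ u ≤ thrUpd G b v) :
    energy G b v (thrUpd G b v) < energy G b u v := by
  simp only [Pi.le_def, Bool.le_iff_imp, not_forall] at h
  obtain ⟨i, hu, hv⟩ := h
  rw [thrUpd_eq_true_iff] at hv
  refine energy_thrUpd_lt G (sub_le_self b zero_le_one) le_rfl i ?_
  rw [ind_thrUpd, if_neg hv]
  simp only [ind, hu, if_true]
  linarith

lemma energy_thrUpd_lt_of_not_ge (b : V → ℤ) {u v : V → Bool} (h : ¬ thrUpd G b v ≤ u) :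
    energy G (b - 1) v (thrUpd G b v) < energy G (b - 1) u v := by
  simp only [Pi.le_def, Bool.le_iff_imp, not_forall, Bool.not_eq_true] at h
  obtain ⟨i, hv, hu⟩ := h
  rw [thrUpd_eq_true_iff] at hv
  refine energy_thrUpd_lt G le_rfl (sub_le_self b zero_le_one) i ?_
  rw [ind_thrUpd, if_pos hv]
  simp only [ind, hu, Bool.false_eq_true, if_false, Pi.sub_apply, Pi.one_apply]
  linarith

lemma localEnergy_thrUpd_sub_le {b c : V → ℤ} (hb : 0 ≤ b) (hbd : ∀ i, b i ≤ G.degree i + 1)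
    (hc : b - 1 ≤ c) (hcb : c ≤ b) (x x' : V → Bool) (i : V) :
    localEnergy G c x' (thrUpd G b x') i - localEnergy G c x (thrUpd G b x) i
      ≤ G.degree i + 1 := by
  have : 0 ≤ b i := hb i
  have : b i - 1 ≤ c i := hc i
  have := hbd i; have := hcb i
  have := adjMatrix_mulVec_ind_nonneg G x i; have := adjMatrix_mulVec_ind_le_degree G x i
  have := adjMatrix_mulVec_ind_nonneg G x' i; have := adjMatrix_mulVec_ind_le_degree G x' i
  simp only [localEnergy, ind_thrUpd]
  generalize (G.adjMatrix ℤ *ᵥ ind x) i = n at *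
  generalize (G.adjMatrix ℤ *ᵥ ind x') i = n' at *
  unfold ind
  split_ifs <;> linarith

lemma energy_thrUpd_sub_le {b c : V → ℤ} (hb : 0 ≤ b) (hbd : ∀ i, b i ≤ G.degree i + 1)
    (hc : b - 1 ≤ c) (hcb : c ≤ b) (x x' : V → Bool) :
    energy G c x' (thrUpd G b x') - energy G c x (thrUpd G b x)
      ≤ 2 * #G.edgeFinset + Fintype.card V := by
  rw [energy_eq_sum_localEnergy, energy_eq_sum_localEnergy, ← sum_sub_distrib]
  calc _ ≤ ∑ i, ((G.degree i : ℤ) + 1) :=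
        sum_le_sum fun i _ => localEnergy_thrUpd_sub_le G hb hbd hc hcb x x' i
    _ = _ := by
      rw [sum_add_distrib, ← Nat.cast_sum, G.sum_degrees_eq_twice_card_edges]
      simp

lemma exists_energy_iterate_le_succ {b c : V → ℤ} (hb : 0 ≤ b)
    (hbd : ∀ i, b i ≤ G.degree i + 1) (hc : b - 1 ≤ c) (hcb : c ≤ b) (x : V → Bool) :
    ∃ k ≤ 2 * #G.edgeFinset + Fintype.card V,
      energy G c ((thrUpd G b)^[k] x) ((thrUpd G b)^[k + 1] x)
        ≤ energy G c ((thrUpd G b)^[k + 1] x) ((thrUpd G b)^[k + 2] x) := by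
  by_contra! hdrop
  have hdescent := add_le_of_forall_succ_lt
    (e := fun k => energy G c ((thrUpd G b)^[k] x) ((thrUpd G b)^[k + 1] x))
    (n := 2 * #G.edgeFinset + Fintype.card V + 1) fun k hk => hdrop k (by omega)
  have hrange := energy_thrUpd_sub_le G hb hbd hc hcb
    ((thrUpd G b)^[2 * #G.edgeFinset + Fintype.card V + 1] x) x
  simp only [Function.iterate_succ_apply', Function.iterate_zero_apply] at hdescent hrange
  push_cast at hdescent
  omega

theorem exists_iterate_thrUpd_add_two_eq (b : V → ℤ) (x : V → Bool) :
    ∃ k ≤ 2 * #G.edgeFinset + Fintype.card V,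
      (thrUpd G b)^[k + 2] x = (thrUpd G b)^[k] x := by
  rw [← thrUpd_clampThreshold G b]
  set b' := clampThreshold G b
  have hb : 0 ≤ b' := fun i => le_max_left _ _
  have hbd : ∀ i, b' i ≤ G.degree i + 1 := fun i => max_le (by positivity) (min_le_right _ _)
  have step (k : ℕ) : (thrUpd G b')^[k + 2] x = thrUpd G b' ((thrUpd G b')^[k + 1] x) :=
    Function.iterate_succ_apply' _ _ _
  by_contra! hne
  rcases (thrUpd_monotone G b').forall_not_le_or_forall_not_ge_of_iterate_add_two_ne x _ hne
    with hflip | hflip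
  · obtain ⟨k, hk, hle⟩ :=
      exists_energy_iterate_le_succ G hb hbd (sub_le_self b' zero_le_one) le_rfl x
    rw [step] at hle
    exact (energy_thrUpd_lt_of_not_le G b' (step k ▸ hflip k hk)).not_ge hle
  · obtain ⟨k, hk, hle⟩ :=
      exists_energy_iterate_le_succ G hb hbd le_rfl (sub_le_self b' zero_le_one) x
    rw [step] at hle
    exact (energy_thrUpd_lt_of_not_ge G b' (step k ▸ hflip k hk)).not_ge hle

end ThresholdDynamics

theorem fdTraj_sub_one_add {V : Type*} [Fintype V] [DecidableEq V] (G : SimpleGraph V)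
    [DecidableRel G.Adj] (b : V → ℤ) (S : Finset V) (d : ℕ) (x0 : V → Bool) (k : ℕ) :
    fdTraj G b S d x0 (d - 1 + k) = (thrUpd G b)^[k] (fdTraj G b S d x0 (d - 1)) := by
  induction k with
  | zero => rfl
  | succ k ih =>
    rw [← add_assoc, fdTraj, if_neg (by omega), ih, Function.iterate_succ_apply']

theorem fixed_duration_intervention_convergence_general {V : Type*} [Fintype V] [DecidableEq V]
    (G : SimpleGraph V) [DecidableRel G.Adj] (b : V → ℤ) (S : Finset V) (d : ℕ)
    (x0 : V → Bool) :
    ∃ t ≤ d + 2 * G.edgeFinset.card + Fintype.card V,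
      fdTraj G b S d x0 (t + 2) = fdTraj G b S d x0 t := by
  obtain ⟨k, hk, hcycle⟩ :=
    ThresholdDynamics.exists_iterate_thrUpd_add_two_eq G b (fdTraj G b S d x0 (d - 1))
  refine ⟨d - 1 + k, by omega, ?_⟩
  rw [add_assoc, fdTraj_sub_one_add, fdTraj_sub_one_add, hcycle]

/-- Fixed-duration intervention convergence bound: for any seed set `S`, duration
`d ≥ 1`, and initial vector `x0` with the seeds at Behavior 1, within `d + 2|E| + |V|`
time steps the adoption vector converges to a cycle of length at most 2. -/
theorem fixed_duration_intervention_convergence {V : Type*} [Fintype V] [DecidableEq V]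
    (G : SimpleGraph V) [DecidableRel G.Adj] (b : V → ℤ) (S : Finset V) (d : ℕ)
    (hd : 1 ≤ d) (x0 : V → Bool) (hx0 : ∀ i ∈ S, x0 i = true) :
    ∃ t ≤ d + 2 * G.edgeFinset.card + Fintype.card V,
      fdTraj G b S d x0 (t + 2) = fdTraj G b S d x0 t :=
  fixed_duration_intervention_convergence_general G b S d x0
end
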